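/- arXiv:2004.12749 — 2 statements merged into one kernel-verified Lean document; each statement's English description precedes it below -/
import Mathlib

section
/- In a sequential effect algebra, let p be an idempotent with p ⊥ a (i.e. p ⊕ a defined). Then a is idempotent if and only if p ⊕ a is idempotent. -/
universe u

/-- `EAle orth add a b` : the effect-algebra order `a ≤ b` iff `∃ c, a ⊕ c = b`. -/
def EAle {α : Type u} (orth : α → α → Prop) (add : α → α → α) (a b : α) : Prop :=
  ∃ c, orth a c ∧ add a c = b

/-- An effect algebra: partial sum `add` (defined when `orth` holds), zero, complement. -/
structure EffectAlgebra (α : Type u) where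
  orth : α → α → Prop
  add : α → α → α
  zero : α
  compl : α → α
  orth_comm : ∀ a b, orth a b → orth b a
  add_comm' : ∀ a b, orth a b → add a b = add b a
  orth_zero : ∀ a, orth a zero
  add_zero' : ∀ a, add a zero = a
  orth_assoc₁ : ∀ a b c, orth a b → orth (add a b) c → orth b c
  orth_assoc₂ : ∀ a b c, orth a b → orth (add a b) c → orth a (add b c)
  add_assoc' : ∀ a b c, orth a b → orth (add a b) c → add (add a b) c = add a (add b c)
  orth_compl : ∀ a, orth a (compl a)
  add_compl : ∀ a, add a (compl a) = compl zero
  compl_unique : ∀ a b, orth a b → add a b = compl zero → b = compl a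
  orth_one : ∀ a, orth a (compl zero) → a = zero

namespace EffectAlgebra
variable {α : Type u}
/-- The effect-algebra order. -/
def le (E : EffectAlgebra α) : α → α → Prop := EAle E.orth E.add
/-- The unit `1 := 0⊥`. -/
def one (E : EffectAlgebra α) : α := E.compl E.zero
end EffectAlgebra

/-- A sequential effect algebra: an effect algebra with a total product `seq`
satisfying S1–S5. -/
structure SEA (α : Type u) extends EffectAlgebra α where
  seq : α → α → α
  seq_orth : ∀ a b c, orth b c → orth (seq a b) (seq a c)                                -- S1
  seq_add : ∀ a b c, orth b c → seq a (add b c) = add (seq a b) (seq a c)                -- S1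
  one_seq : ∀ a, seq (compl zero) a = a                                                  -- S2
  seq_zero_symm : ∀ a b, seq a b = zero → seq b a = zero                                 -- S3
  comm_compl : ∀ a b, seq a b = seq b a → seq a (compl b) = seq (compl b) a              -- S4
  comm_assoc : ∀ a b c, seq a b = seq b a → seq a (seq b c) = seq (seq a b) c            -- S4
  comm_seq : ∀ a b c, seq c a = seq a c → seq c b = seq b c →
    seq c (seq a b) = seq (seq a b) c                                                    -- S5
  comm_add : ∀ a b c, seq c a = seq a c → seq c b = seq b c → orth a b →
    seq c (add a b) = seq (add a b) c                                                    -- S5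


section Aux
variable {α : Type u}

namespace EffectAlgebra
variable (E : EffectAlgebra α)

lemma orth_zero' (x : α) : E.orth E.zero x := E.orth_comm _ _ (E.orth_zero x)

lemma zero_add' (x : α) : E.add E.zero x = x := by
  rw [E.add_comm' _ _ (E.orth_zero' x), E.add_zero']

lemma compl_invol (x : α) : E.compl (E.compl x) = x :=
  (E.compl_unique (E.compl x) x (E.orth_comm _ _ (E.orth_compl x))
    (by rw [E.add_comm' _ _ (E.orth_comm _ _ (E.orth_compl x)), E.add_compl])).symm

lemma cancel (a b c : α) (hab : E.orth a b) (hac : E.orth a c)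
    (h : E.add a b = E.add a c) : b = c := by
  set d := E.compl (E.add a b) with hd
  have key : ∀ x, E.orth a x → E.add a x = E.add a b → E.add x (E.add a d) = E.compl E.zero ∧
      E.orth x (E.add a d) := by
    intro x hx hxe
    have hxa : E.orth x a := E.orth_comm _ _ hx
    have h1 : E.add x a = E.add a b := by rw [E.add_comm' _ _ hxa]; exact hxe
    have h2 : E.orth (E.add x a) d := by rw [h1]; exact E.orth_compl _
    have h3 : E.orth x (E.add a d) := E.orth_assoc₂ x a d hxa h2
    refine ⟨?_, h3⟩
    rw [← E.add_assoc' x a d hxa h2, h1, E.add_compl]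
  obtain ⟨hb1, hb2⟩ := key b hab rfl
  obtain ⟨hc1, hc2⟩ := key c hac h.symm
  have eb : E.add a d = E.compl b := E.compl_unique b _ hb2 hb1
  have ec : E.add a d = E.compl c := E.compl_unique c _ hc2 hc1
  calc b = E.compl (E.compl b) := (E.compl_invol b).symm
    _ = E.compl (E.compl c) := by rw [← eb, ec]
    _ = c := E.compl_invol c

lemma eq_zero_of_add_eq_zero (x y : α) (hxy : E.orth x y)
    (h : E.add x y = E.zero) : x = E.zero ∧ y = E.zero := by
  have h1 : E.orth (E.add x y) (E.compl E.zero) := by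
    rw [h]; exact E.orth_zero' _
  have hy : y = E.zero := E.orth_one y (E.orth_assoc₁ x y _ hxy h1)
  subst hy
  rw [E.add_zero'] at h
  exact ⟨h, rfl⟩

end EffectAlgebra

namespace SEA
variable (E : SEA α)

lemma seq_zero (a : α) : E.seq a E.zero = E.zero := by
  have h0 : E.orth E.zero E.zero := E.toEffectAlgebra.orth_zero E.zero
  have h : E.seq a (E.add E.zero E.zero) = E.add (E.seq a E.zero) (E.seq a E.zero) :=
    E.seq_add a _ _ h0
  rw [E.add_zero'] at h
  exact E.toEffectAlgebra.cancel (E.seq a E.zero) (E.seq a E.zero) E.zero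
    (E.seq_orth a _ _ h0) (E.toEffectAlgebra.orth_zero _)
    (by rw [E.add_zero']; exact h.symm)

lemma seq_one (a : α) : E.seq a (E.compl E.zero) = a := by
  have h : E.seq a E.zero = E.seq E.zero a := by
    rw [E.seq_zero, E.seq_zero_symm a E.zero (E.seq_zero a)]
  have := E.comm_compl a E.zero h
  rw [this]
  exact E.one_seq a

lemma seq_compl_self_of_idem (p : α) (hp : E.seq p p = p) :
    E.seq p (E.compl p) = E.zero := by
  have h1 : E.seq p (E.add p (E.compl p)) = E.add (E.seq p p) (E.seq p (E.compl p)) :=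
    E.seq_add p _ _ (E.toEffectAlgebra.orth_compl p)
  rw [E.add_compl, hp] at h1
  have h2 : E.seq p (E.compl E.zero) = p := E.seq_one p
  refine (E.toEffectAlgebra.cancel p (E.seq p (E.compl p)) E.zero ?_ (E.toEffectAlgebra.orth_zero p) ?_).symm.symm
  · have := E.seq_orth p p (E.compl p) (E.toEffectAlgebra.orth_compl p)
    rwa [hp] at this
  · rw [E.add_zero', ← h1, h2]

end SEA
end Aux

/-- If `p` is idempotent and `p ⊕ a` is defined, then `a` is idempotent iff
`p ⊕ a` is idempotent. -/

theorem sea_add_idem_iff {α : Type u} (E : SEA α) (p a : α)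
    (hp : E.seq p p = p) (hpa : E.orth p a) :
    E.seq a a = a ↔ E.seq (E.add p a) (E.add p a) = E.add p a := by
  -- notation shortcuts
  have hap : E.orth a p := E.orth_comm _ _ hpa
  set d := E.compl (E.add p a) with hd
  have hod : E.orth (E.add p a) d := E.orth_compl _
  have had : E.orth a d := E.orth_assoc₁ p a d hpa hod
  -- a ⊕ d = compl p
  have hadp : E.add a d = E.compl p :=
    E.compl_unique p _ (E.orth_assoc₂ p a d hpa hod)
      (by rw [← E.add_assoc' p a d hpa hod, E.add_compl])
  -- seq p a = 0
  have hpc : E.seq p (E.compl p) = E.zero := E.seq_compl_self_of_idem p hp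
  have hpad : E.add (E.seq p a) (E.seq p d) = E.zero := by
    rw [← E.seq_add p a d had, hadp, hpc]
  have hpa0 : E.seq p a = E.zero :=
    (E.toEffectAlgebra.eq_zero_of_add_eq_zero _ _ (E.seq_orth p a d had) hpad).1
  have hap0 : E.seq a p = E.zero := E.seq_zero_symm p a hpa0
  -- a∘a ⊕ a∘a' = a
  have haa : E.add (E.seq a a) (E.seq a (E.compl a)) = a := by
    rw [← E.seq_add a a _ (E.orth_compl a), E.add_compl, E.seq_one]
  have hoaa : E.orth (E.seq a a) (E.seq a (E.compl a)) :=
    E.seq_orth a a _ (E.orth_compl a)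
  -- orth p (seq a a)
  have hpaa : E.orth p (E.seq a a) := by
    have h1 : E.orth (E.seq a (E.compl a)) (E.seq a a) := E.orth_comm _ _ hoaa
    have h2 : E.add (E.seq a (E.compl a)) (E.seq a a) = a := by
      rw [E.add_comm' _ _ h1]; exact haa
    have h3 : E.orth (E.add (E.seq a (E.compl a)) (E.seq a a)) p := by
      rw [h2]; exact hap
    exact E.orth_comm _ _ (E.orth_assoc₁ _ _ _ h1 h3)
  -- seq p (p⊕a) = p
  have c1 : E.seq p (E.add p a) = p := by
    rw [E.seq_add p p a hpa, hp, hpa0, E.add_zero']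
  have comm1 : E.seq (E.add p a) p = p := by
    rw [← E.comm_add p a p rfl (by rw [hpa0, hap0]) hpa, c1]
  -- seq (p⊕a) a = seq a a
  have c2 : E.seq a (E.add p a) = E.seq a a := by
    rw [E.seq_add a p a hpa, hap0, E.toEffectAlgebra.zero_add']
  have comm2 : E.seq (E.add p a) a = E.seq a a := by
    rw [← E.comm_add p a a (by rw [hpa0, hap0]) rfl hpa, c2]
  -- the square
  have sq : E.seq (E.add p a) (E.add p a) = E.add p (E.seq a a) := by
    rw [E.seq_add _ p a hpa, comm1, comm2]
  constructor
  · intro h; rw [sq, h]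
  · intro h
    rw [sq] at h
    exact E.toEffectAlgebra.cancel p (E.seq a a) a hpaa hpa h
end

section
/- Let p and q be idempotents of a sequential effect algebra. Then p ∘ q is idempotent if and only if p and q commute; and in that case p ∘ q is the infimum (greatest lower bound) of p and q in the effect-algebra order. -/
universe u

section Lemmas
variable {α : Type u}

/-- compl is involutive. -/
lemma ea_compl_compl (E : EffectAlgebra α) (a : α) : E.compl (E.compl a) = a := by
  have h1 := E.orth_compl a
  have h3 : E.add (E.compl a) a = E.compl E.zero := by
    rw [← E.add_comm' a (E.compl a) h1]; exact E.add_compl a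
  exact (E.compl_unique (E.compl a) a (E.orth_comm _ _ h1) h3).symm

/-- `(a ⊕ b)⊥ ⊕ a = b⊥` : the complement of `b` is determined by `a` and `a ⊕ b`. -/
lemma ea_compl_eq (E : EffectAlgebra α) (a b : α) (hab : E.orth a b) :
    E.add (E.compl (E.add a b)) a = E.compl b := by
  set d := E.add a b with hd
  have hdd : E.orth (E.add a b) (E.compl d) := by rw [hd]; exact E.orth_compl d
  have h3 : E.orth b (E.compl d) := E.orth_assoc₁ a b (E.compl d) hab hdd
  have h4 : E.orth a (E.add b (E.compl d)) := E.orth_assoc₂ a b (E.compl d) hab hdd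
  have h5 : E.add a (E.add b (E.compl d)) = E.compl E.zero := by
    rw [← E.add_assoc' a b (E.compl d) hab hdd, ← hd, E.add_compl]
  have h6o : E.orth (E.add b (E.compl d)) a := E.orth_comm _ _ h4
  have h6 : E.add (E.add b (E.compl d)) a = E.compl E.zero := by
    rw [E.add_comm' _ a h6o]; exact h5
  have h7 : E.orth b (E.add (E.compl d) a) := E.orth_assoc₂ b (E.compl d) a h3 h6o
  have h8 : E.add b (E.add (E.compl d) a) = E.compl E.zero := by
    rw [← E.add_assoc' b (E.compl d) a h3 h6o]; exact h6
  exact E.compl_unique b (E.add (E.compl d) a) h7 h8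

/-- Cancellation in effect algebras. -/
lemma ea_cancel (E : EffectAlgebra α) (a b c : α) (hab : E.orth a b) (hac : E.orth a c)
    (h : E.add a b = E.add a c) : b = c := by
  have h1 := ea_compl_eq E a b hab
  have h2 := ea_compl_eq E a c hac
  rw [h] at h1
  have : E.compl b = E.compl c := h1.symm.trans h2
  calc b = E.compl (E.compl b) := (ea_compl_compl E b).symm
    _ = E.compl (E.compl c) := by rw [this]
    _ = c := ea_compl_compl E c

/-- A sum is zero only if both summands are zero. -/
lemma ea_zero_sum (E : EffectAlgebra α) (a b : α) (hab : E.orth a b)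
    (h : E.add a b = E.zero) : a = E.zero ∧ b = E.zero := by
  have h1 : E.orth E.zero (E.compl E.zero) := E.orth_compl E.zero
  have h2 : E.orth (E.add a b) (E.compl E.zero) := by rw [h]; exact h1
  have hb1 : E.orth b (E.compl E.zero) := E.orth_assoc₁ a b _ hab h2
  have hb : b = E.zero := E.orth_one b hb1
  refine ⟨?_, hb⟩
  rw [hb, E.add_zero'] at h
  exact h

end Lemmas
section SEALemmas
variable {α : Type u} (E : SEA α)

lemma sea_seq_zero (a : α) : E.seq a E.zero = E.zero := by
  have h00 : E.orth E.zero E.zero := E.orth_zero E.zero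
  have h1 : E.seq a (E.add E.zero E.zero) = E.add (E.seq a E.zero) (E.seq a E.zero) :=
    E.seq_add a E.zero E.zero h00
  rw [E.add_zero' E.zero] at h1
  have h2 : E.add (E.seq a E.zero) E.zero = E.add (E.seq a E.zero) (E.seq a E.zero) := by
    rw [E.add_zero']; exact h1
  exact (ea_cancel E.toEffectAlgebra (E.seq a E.zero) E.zero (E.seq a E.zero)
    (E.orth_zero _) (E.seq_orth a E.zero E.zero h00) h2).symm

lemma sea_zero_seq (a : α) : E.seq E.zero a = E.zero :=
  E.seq_zero_symm a E.zero (sea_seq_zero E a)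

lemma sea_seq_one (a : α) : E.seq a (E.compl E.zero) = a := by
  have hcomm : E.seq a E.zero = E.seq E.zero a := by
    rw [sea_seq_zero E a, sea_zero_seq E a]
  have := E.comm_compl a E.zero hcomm
  rw [this, E.one_seq]

/-- `a∘b ⊕ a∘b⊥ = a`. -/
lemma sea_seq_split (a b : α) :
    E.orth (E.seq a b) (E.seq a (E.compl b)) ∧
    E.add (E.seq a b) (E.seq a (E.compl b)) = a := by
  have hb := E.orth_compl b
  refine ⟨E.seq_orth a b (E.compl b) hb, ?_⟩
  rw [← E.seq_add a b (E.compl b) hb, E.add_compl, sea_seq_one]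

/-- `a∘b ≤ a`. -/
lemma sea_seq_le_left (a b : α) : E.le (E.seq a b) a :=
  ⟨E.seq a (E.compl b), (sea_seq_split E a b).1, (sea_seq_split E a b).2⟩

/-- If `a∘b = a` then `a∘b⊥ = 0`. -/
lemma sea_seq_compl_zero (a b : α) (h : E.seq a b = a) : E.seq a (E.compl b) = E.zero := by
  have hs := sea_seq_split E a b
  have h2 : E.add a (E.seq a (E.compl b)) = E.add a E.zero := by
    rw [E.add_zero']
    have := hs.2; rw [h] at this; exact this
  have ho : E.orth a (E.seq a (E.compl b)) := by
    have := hs.1; rw [h] at this; exact this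
  exact ea_cancel E.toEffectAlgebra a _ _ ho (E.orth_zero a) h2

/-- For an idempotent `p`, `p∘p⊥ = 0` and `p⊥∘p = 0`. -/
lemma sea_idem_compl (p : α) (hp : E.seq p p = p) :
    E.seq p (E.compl p) = E.zero ∧ E.seq (E.compl p) p = E.zero := by
  have h1 := sea_seq_compl_zero E p p hp
  exact ⟨h1, E.seq_zero_symm p (E.compl p) h1⟩

/-- For an idempotent `p` and `a ≤ p`: `p∘a = a∘p = a`. -/
lemma sea_le_idem (p a : α) (hp : E.seq p p = p) (h : E.le a p) :
    E.seq p a = a ∧ E.seq a p = a := by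
  obtain ⟨c, hac, hsum⟩ := h
  have hp' := (sea_idem_compl E p hp).2
  -- p⊥ ∘ (a ⊕ c) = 0
  have h1 : E.add (E.seq (E.compl p) a) (E.seq (E.compl p) c) = E.zero := by
    rw [← E.seq_add (E.compl p) a c hac, hsum]; exact hp'
  have h2 : E.seq (E.compl p) a = E.zero :=
    (ea_zero_sum E.toEffectAlgebra _ _ (E.seq_orth (E.compl p) a c hac) h1).1
  have h3 : E.seq a (E.compl p) = E.zero := E.seq_zero_symm (E.compl p) a h2
  -- a commutes with p⊥, hence with p
  have hcomm' : E.seq a (E.compl p) = E.seq (E.compl p) a := by rw [h2, h3]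
  have hcomm : E.seq a p = E.seq p a := by
    have := E.comm_compl a (E.compl p) hcomm'
    rwa [ea_compl_compl E.toEffectAlgebra p] at this
  -- a∘p = a
  have h4 : E.seq a p = a := by
    have hs := sea_seq_split E a p
    have := hs.2
    rw [h3, E.add_zero'] at this
    exact this
  exact ⟨hcomm ▸ h4, h4⟩

end SEALemmas
/-- For idempotents `p, q`: `p ∘ q` is idempotent iff `p` and `q` commute, and
in that case `p ∘ q` is the infimum of `p` and `q`. -/
theorem sea_idem_seq_idem_iff_comm {α : Type u} (E : SEA α) (p q : α)
    (hp : E.seq p p = p) (hq : E.seq q q = q) :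
    (E.seq (E.seq p q) (E.seq p q) = E.seq p q ↔ E.seq p q = E.seq q p) ∧
    (E.seq p q = E.seq q p →
      E.le (E.seq p q) p ∧ E.le (E.seq p q) q ∧
      ∀ r, E.le r p → E.le r q → E.le r (E.seq p q)) := by
  constructor
  · constructor
    · -- idempotent ⇒ commute
      intro h
      set r := E.seq p q with hr
      -- r ≤ p, so p∘r = r∘p = r
      have hrlep : E.le r p := sea_seq_le_left E p q
      obtain ⟨hpr, hrp⟩ := sea_le_idem E p r hp hrlep
      -- r∘q = r
      have hrq : E.seq r q = r := by
        have hcomm : E.seq r p = E.seq p r := hrp.trans hpr.symm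
        have h1 : E.seq r (E.seq p q) = E.seq (E.seq r p) q := E.comm_assoc r p q hcomm
        rw [hrp, ← hr, h] at h1
        exact h1.symm
      -- r and q commute, q∘r = r
      have h2 : E.seq r (E.compl q) = E.zero := sea_seq_compl_zero E r q hrq
      have h3 : E.seq (E.compl q) r = E.zero := E.seq_zero_symm r (E.compl q) h2
      have h4 : E.seq r q = E.seq q r := by
        have h5 : E.seq r (E.compl q) = E.seq (E.compl q) r := by rw [h2, h3]
        have := E.comm_compl r (E.compl q) h5
        rwa [ea_compl_compl E.toEffectAlgebra q] at this
      have hqr : E.seq q r = r := h4 ▸ hrq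
      -- r ≤ q : write q = r ⊕ t
      have hrleq : E.le r q := by
        have := sea_seq_le_left E q r
        rwa [hqr] at this
      obtain ⟨t, hrt, htq⟩ := hrleq
      -- p∘t = 0
      have h6 : E.add r (E.seq p t) = E.add r E.zero := by
        rw [E.add_zero', ← hpr]
        have : E.seq p (E.add r t) = E.add (E.seq p r) (E.seq p t) :=
          E.seq_add p r t hrt
        rw [htq, ← hr, hpr] at this
        rw [hpr]
        exact this.symm
      have ho : E.orth r (E.seq p t) := by
        have := E.seq_orth p r t hrt
        rwa [hpr] at this
      have h7 : E.seq p t = E.zero :=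
        ea_cancel E.toEffectAlgebra r _ _ ho (E.orth_zero r) h6
      have h8 : E.seq t p = E.zero := E.seq_zero_symm p t h7
      -- assemble by S5
      have h9 : E.seq p (E.add r t) = E.seq (E.add r t) p :=
        E.comm_add r t p (hpr.trans hrp.symm) (by rw [h7, h8]) hrt
      rw [htq] at h9
      rw [hr]
      exact h9
    · -- commute ⇒ idempotent
      intro hcomm
      have step1 : E.seq q (E.seq p q) = E.seq p q := by
        rw [hcomm, E.comm_assoc q q p rfl, hq]
      have step2 : E.seq p (E.seq q (E.seq p q)) = E.seq (E.seq p q) (E.seq p q) :=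
        E.comm_assoc p q (E.seq p q) hcomm
      rw [step1, E.comm_assoc p p q rfl, hp] at step2
      exact step2.symm
  · intro hcomm
    refine ⟨sea_seq_le_left E p q, ?_, ?_⟩
    · rw [hcomm]; exact sea_seq_le_left E q p
    · intro r hrp hrq
      obtain ⟨hpr, -⟩ := sea_le_idem E p r hp hrp
      obtain ⟨hqr, -⟩ := sea_le_idem E q r hq hrq
      have h1 : E.seq (E.seq p q) r = r := by
        rw [← E.comm_assoc p q r hcomm, hqr, hpr]
      have := sea_seq_le_left E (E.seq p q) r
      rwa [h1] at this
end
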